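/- arXiv:1302.5812 — 3 statements merged into one kernel-verified Lean document; each statement's English description precedes it below -/
import Mathlib

section
/- Let a be continuous on [0,T]×[0,1], uniformly L-Lipschitz in x, and satisfy a(t,x) ≥ c > 0 everywhere. For (t,x) ∈ [0,T]×[0,1], let e(t,x) be the entrance time of the backward characteristic through (t,x), i.e., the left endpoint of the maximal interval of existence in [0,t] of the flow φ(·,t,x). Then e is Lipschitz on [0,T]×[0,1] with Lipschitz constant c⁻¹·max(1, ‖a‖_{C⁰([0,T]×[0,1])})·e^{LT}. -/
/-!
Let `e₁ > e₂` be the entrance times of the characteristics through `(t₁, x₁)` and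
`(t₂, x₂)`; then `e₁ > 0`, so the first one enters through `x = 0` at time `e₁`. The second one
moves right with speed at least `c`, so `c (e₁ - e₂)` is at most its position at time `e₁`,
that is, its distance to the first one. By Grönwall's inequality run backward from
`min t₁ t₂`, this distance is at most `e^{LT}` times the distance at time `min t₁ t₂`, which is
at most `|x₁ - x₂| + M |t₁ - t₂|`. If instead the second characteristic only lives up to
`t₂ < e₁`, speed bounds alone give `c (e₁ - e₂) ≤ M (t₁ - t₂) + |x₁ - x₂|`.
-/

open Set Real

def HasDerivWithinIcc (ψ g : ℝ → ℝ) (α β : ℝ) : Prop :=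
  ∀ s ∈ Icc α β, HasDerivWithinAt ψ (g s) (Icc α β) s

namespace HasDerivWithinIcc

variable {ψ ψ₁ ψ₂ g g₁ g₂ : ℝ → ℝ} {α α' β β' c L M : ℝ}

theorem mono (h : HasDerivWithinIcc ψ g α β) (hα : α ≤ α') (hβ : β' ≤ β) :
    HasDerivWithinIcc ψ g α' β' := fun s hs =>
  (h s (Icc_subset_Icc hα hβ hs)).mono (Icc_subset_Icc hα hβ)

theorem sub (h₁ : HasDerivWithinIcc ψ₁ g₁ α β) (h₂ : HasDerivWithinIcc ψ₂ g₂ α β) :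
    HasDerivWithinIcc (ψ₁ - ψ₂) (g₁ - g₂) α β := fun s hs =>
  (h₁ s hs).sub (h₂ s hs)

theorem hasDerivWithinAt_Ici (h : HasDerivWithinIcc ψ g α β) {s : ℝ} (hs : s ∈ Ico α β) :
    HasDerivWithinAt ψ (g s) (Ici s) s :=
  (h s (Ico_subset_Icc_self hs)).mono_of_mem_nhdsWithin (Icc_mem_nhdsGE_of_mem hs)

theorem abs_sub_le (h : HasDerivWithinIcc ψ g α β) (hg : ∀ s ∈ Icc α β, |g s| ≤ M)
    (hαβ : α ≤ β) : |ψ β - ψ α| ≤ M * (β - α) :=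
  norm_image_sub_le_of_norm_deriv_le_segment' h (fun s hs => hg s (Ico_subset_Icc_self hs))
    β ⟨hαβ, le_rfl⟩

theorem mul_sub_le_sub (h : HasDerivWithinIcc ψ g α β) (hg : ∀ s ∈ Icc α β, c ≤ g s)
    (hαβ : α ≤ β) : c * (β - α) ≤ ψ β - ψ α := by
  have hline : ∀ s, HasDerivAt (fun s => ψ α + c * (s - α)) c s := fun s => by
    simpa using ((hasDerivAt_id s).sub_const α).const_mul c |>.const_add (ψ α)
  have := image_le_of_deriv_right_le_deriv_boundary (f := fun s => ψ α + c * (s - α))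
    (by fun_prop) (fun s _ => (hline s).hasDerivWithinAt) (by simp)
    (fun s hs => (h s hs).continuousWithinAt) (fun s hs => h.hasDerivWithinAt_Ici hs)
    (fun s hs => hg s (Ico_subset_Icc_self hs)) ⟨hαβ, le_rfl⟩
  linarith

/-- From the forward Grönwall inequality through the reflection `s ↦ α + β - s` of `[α, β]`. -/
theorem abs_le_mul_exp (h : HasDerivWithinIcc ψ g α β)
    (hg : ∀ s ∈ Icc α β, |g s| ≤ L * |ψ s|) (hαβ : α ≤ β) :
    |ψ α| ≤ |ψ β| * exp (L * (β - α)) := by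
  set σ : ℝ → ℝ := fun s => α + β - s
  have hσ : MapsTo σ (Icc α β) (Icc α β) := fun s hs =>
    ⟨by simp only [σ]; linarith [hs.2], by simp only [σ]; linarith [hs.1]⟩
  have hrefl : HasDerivWithinIcc (ψ ∘ σ) (fun s => -g (σ s)) α β := fun s hs => by
    simpa using (h (σ s) (hσ hs)).comp s
      ((hasDerivWithinAt_id s (Icc α β)).const_sub (α + β)) hσ
  have := norm_le_gronwallBound_of_norm_deriv_right_le (δ := |ψ β|) (ε := 0)
    (fun s hs => (hrefl s hs).continuousWithinAt) (fun s hs => hrefl.hasDerivWithinAt_Ici hs)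
    (by simp [σ]) (fun s hs => by simpa using hg (σ s) (hσ (Ico_subset_Icc_self hs)))
    β ⟨hαβ, le_rfl⟩
  simpa [σ, gronwallBound_ε0] using this

end HasDerivWithinIcc

section Characteristics

variable {ψ₁ ψ₂ g₁ g₂ : ℝ → ℝ} {c L M e₁ e₂ t₁ t₂ τ : ℝ}

theorem abs_sub_min_le (h₁ : HasDerivWithinIcc ψ₁ g₁ e₁ t₁)
    (h₂ : HasDerivWithinIcc ψ₂ g₂ e₂ t₂) (hg₁ : ∀ s ∈ Icc e₁ t₁, |g₁ s| ≤ M)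
    (hg₂ : ∀ s ∈ Icc e₂ t₂, |g₂ s| ≤ M) (he₁ : e₁ ≤ t₂) (he₂ : e₂ ≤ t₁) :
    |ψ₁ (min t₁ t₂) - ψ₂ (min t₁ t₂)| ≤ M * |t₁ - t₂| + |ψ₁ t₁ - ψ₂ t₂| := by
  rcases le_total t₁ t₂ with ht | ht
  · have := (h₂.mono he₂ le_rfl).abs_sub_le
      (fun s hs => hg₂ s (Icc_subset_Icc_left he₂ hs)) ht
    rw [min_eq_left ht, abs_sub_comm t₁, abs_of_nonneg (sub_nonneg.2 ht)]
    linarith [abs_sub_le (ψ₁ t₁) (ψ₂ t₂) (ψ₂ t₁)]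
  · have := (h₁.mono he₁ le_rfl).abs_sub_le
      (fun s hs => hg₁ s (Icc_subset_Icc_left he₁ hs)) ht
    rw [min_eq_right ht, abs_of_nonneg (sub_nonneg.2 ht)]
    linarith [abs_sub_le (ψ₁ t₂) (ψ₁ t₁) (ψ₂ t₂), abs_sub_comm (ψ₁ t₂) (ψ₁ t₁)]

theorem mul_entrance_sub_le_of_lt (h₁ : HasDerivWithinIcc ψ₁ g₁ e₁ t₁)
    (h₂ : HasDerivWithinIcc ψ₂ g₂ e₂ t₂) (hg₁ : ∀ s ∈ Icc e₁ t₁, |g₁ s| ≤ M)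
    (hg₂ : ∀ s ∈ Icc e₂ t₂, c ≤ g₂ s) (hcM : c ≤ M) (hψ₁ : ψ₁ e₁ = 0) (hψ₂ : 0 ≤ ψ₂ e₂)
    (he₁ : e₁ ≤ t₁) (he₂ : e₂ ≤ t₂) (ht : t₂ < e₁) :
    c * (e₁ - e₂) ≤ M * (t₁ - t₂) + |ψ₁ t₁ - ψ₂ t₂| := by
  have hx₁ : ψ₁ t₁ ≤ M * (t₁ - e₁) := by
    have := h₁.abs_sub_le hg₁ he₁
    rw [hψ₁, sub_zero] at this
    exact (le_abs_self _).trans this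
  have hx₂ := h₂.mul_sub_le_sub hg₂ he₂
  have hgap : c * (e₁ - t₂) ≤ M * (e₁ - t₂) := mul_le_mul_of_nonneg_right hcM (by linarith)
  linarith [neg_abs_le (ψ₁ t₁ - ψ₂ t₂)]

theorem mul_entrance_sub_le_of_le (h₁ : HasDerivWithinIcc ψ₁ g₁ e₁ τ)
    (h₂ : HasDerivWithinIcc ψ₂ g₂ e₂ τ) (hg₂ : ∀ s ∈ Icc e₂ τ, c ≤ g₂ s)
    (hlip : ∀ s ∈ Icc e₁ τ, |g₁ s - g₂ s| ≤ L * |ψ₁ s - ψ₂ s|)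
    (hψ₁ : ψ₁ e₁ = 0) (hψ₂ : 0 ≤ ψ₂ e₂) (he : e₂ ≤ e₁) (hτ : e₁ ≤ τ) :
    c * (e₁ - e₂) ≤ |ψ₁ τ - ψ₂ τ| * exp (L * (τ - e₁)) := by
  have hgap := (h₂.mono le_rfl hτ).mul_sub_le_sub
    (fun s hs => hg₂ s (Icc_subset_Icc_right hτ hs)) he
  have hgron := (h₁.sub (h₂.mono he le_rfl)).abs_le_mul_exp hlip hτ
  simp only [Pi.sub_apply, hψ₁, zero_sub, abs_neg] at hgron
  linarith [le_abs_self (ψ₂ e₁)]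

theorem mul_entrance_sub_le (h₁ : HasDerivWithinIcc ψ₁ g₁ e₁ t₁)
    (h₂ : HasDerivWithinIcc ψ₂ g₂ e₂ t₂) (hg₁ : ∀ s ∈ Icc e₁ t₁, |g₁ s| ≤ M)
    (hg₂ : ∀ s ∈ Icc e₂ t₂, |g₂ s| ≤ M) (hc : ∀ s ∈ Icc e₂ t₂, c ≤ g₂ s)
    (hlip : ∀ s ∈ Icc e₁ t₁, s ∈ Icc e₂ t₂ → |g₁ s - g₂ s| ≤ L * |ψ₁ s - ψ₂ s|)
    (hψ₁ : ψ₁ e₁ = 0) (hψ₂ : 0 ≤ ψ₂ e₂) (he : e₂ ≤ e₁) (he₁ : e₁ ≤ t₁) (he₂ : e₂ ≤ t₂)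
    (hL : 0 ≤ L) :
    c * (e₁ - e₂) ≤ (M * |t₁ - t₂| + |ψ₁ t₁ - ψ₂ t₂|) * exp (L * (t₁ - e₁)) := by
  have he₂mem : e₂ ∈ Icc e₂ t₂ := ⟨le_rfl, he₂⟩
  have hM : 0 ≤ M := (abs_nonneg _).trans (hg₂ e₂ he₂mem)
  rcases lt_or_ge t₂ e₁ with ht | ht
  · have hcM : c ≤ M := (hc e₂ he₂mem).trans ((le_abs_self _).trans (hg₂ e₂ he₂mem))
    have := mul_entrance_sub_le_of_lt h₁ h₂ hg₁ hc hcM hψ₁ hψ₂ he₁ he₂ ht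
    rw [← abs_of_pos (show 0 < t₁ - t₂ by linarith)] at this
    exact this.trans (le_mul_of_one_le_right (by positivity)
      (one_le_exp (mul_nonneg hL (by linarith))))
  · have hτ : e₁ ≤ min t₁ t₂ := le_min he₁ ht
    calc c * (e₁ - e₂)
        ≤ |ψ₁ (min t₁ t₂) - ψ₂ (min t₁ t₂)| * exp (L * (min t₁ t₂ - e₁)) :=
          mul_entrance_sub_le_of_le (h₁.mono le_rfl (min_le_left _ _))
            (h₂.mono le_rfl (min_le_right _ _))
            (fun s hs => hc s ⟨hs.1, hs.2.trans (min_le_right _ _)⟩)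
            (fun s hs => hlip s ⟨hs.1, hs.2.trans (min_le_left _ _)⟩
              ⟨he.trans hs.1, hs.2.trans (min_le_right _ _)⟩) hψ₁ hψ₂ he hτ
      _ ≤ (M * |t₁ - t₂| + |ψ₁ t₁ - ψ₂ t₂|) * exp (L * (t₁ - e₁)) := by
        gcongr
        · exact abs_sub_min_le h₁ h₂ hg₁ hg₂ ht (he.trans he₁)
        · exact min_le_left _ _

end Characteristics

theorem le_inv_mul_max_mul_exp_mul {d u v c L M τ T : ℝ} (hc : 0 < c) (hL : 0 ≤ L)
    (hu : 0 ≤ u) (hv : 0 ≤ v) (hτ : τ ≤ T) (h : c * d ≤ (M * u + v) * exp (L * τ)) :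
    d ≤ c⁻¹ * max 1 M * exp (L * T) * (u + v) := by
  have hM : M * u + v ≤ max 1 M * (u + v) := by
    nlinarith [le_max_left 1 M, le_max_right 1 M]
  rw [mul_assoc, mul_assoc, le_inv_mul_iff₀ hc, ← mul_comm (u + v), ← mul_assoc]
  exact h.trans (mul_le_mul (by linarith) (exp_le_exp.2 (by nlinarith)) (exp_pos _).le
    (by positivity))

theorem stmt_3_general (T L M c : ℝ) (hL : 0 < L) (hc : 0 < c)
    (a : ℝ → ℝ → ℝ)
    (ha_bdd : ∀ t ∈ Set.Icc (0:ℝ) T, ∀ x ∈ Set.Icc (0:ℝ) 1, |a t x| ≤ M)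
    (ha_pos : ∀ t ∈ Set.Icc (0:ℝ) T, ∀ x ∈ Set.Icc (0:ℝ) 1, c ≤ a t x)
    (ha_lip : ∀ t ∈ Set.Icc (0:ℝ) T, ∀ x ∈ Set.Icc (0:ℝ) 1, ∀ y ∈ Set.Icc (0:ℝ) 1,
      |a t x - a t y| ≤ L * |x - y|)
    (φ : ℝ → ℝ → ℝ → ℝ) (e f : ℝ → ℝ → ℝ)
    (hef : ∀ t ∈ Set.Icc (0:ℝ) T, ∀ x ∈ Set.Icc (0:ℝ) 1,
      0 ≤ e t x ∧ e t x ≤ t ∧ t ≤ f t x ∧ f t x ≤ T)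
    (hφ_init : ∀ t ∈ Set.Icc (0:ℝ) T, ∀ x ∈ Set.Icc (0:ℝ) 1, φ t t x = x)
    (hφ_mem : ∀ t ∈ Set.Icc (0:ℝ) T, ∀ x ∈ Set.Icc (0:ℝ) 1,
      ∀ s ∈ Set.Icc (e t x) (f t x), φ s t x ∈ Set.Icc (0:ℝ) 1)
    (hφ_ode : ∀ t ∈ Set.Icc (0:ℝ) T, ∀ x ∈ Set.Icc (0:ℝ) 1,
      ∀ s ∈ Set.Icc (e t x) (f t x),
        HasDerivWithinAt (fun σ => φ σ t x) (a s (φ s t x))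
          (Set.Icc (e t x) (f t x)) s)
    -- if the backward characteristic stops before time `0`, it exits through `x = 0`
    (he_exit : ∀ t ∈ Set.Icc (0:ℝ) T, ∀ x ∈ Set.Icc (0:ℝ) 1,
      0 < e t x → φ (e t x) t x = 0) :
    ∀ t₁ ∈ Set.Icc (0:ℝ) T, ∀ x₁ ∈ Set.Icc (0:ℝ) 1,
    ∀ t₂ ∈ Set.Icc (0:ℝ) T, ∀ x₂ ∈ Set.Icc (0:ℝ) 1,
      |e t₁ x₁ - e t₂ x₂| ≤
        c⁻¹ * max 1 M * Real.exp (L * T) * (|t₁ - t₂| + |x₁ - x₂|) := by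
  have hchar : ∀ t ∈ Icc (0:ℝ) T, ∀ x ∈ Icc (0:ℝ) 1,
      HasDerivWithinIcc (fun s => φ s t x) (fun s => a s (φ s t x)) (e t x) t ∧
        ∀ s ∈ Icc (e t x) t, s ∈ Icc 0 T ∧ φ s t x ∈ Icc 0 1 := fun t ht x hx => by
    obtain ⟨he0, -, htf, -⟩ := hef t ht x hx
    exact ⟨HasDerivWithinIcc.mono (hφ_ode t ht x hx) le_rfl htf, fun s hs =>
      ⟨⟨he0.trans hs.1, hs.2.trans ht.2⟩, hφ_mem t ht x hx s ⟨hs.1, hs.2.trans htf⟩⟩⟩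
  have key : ∀ t₁ ∈ Icc (0:ℝ) T, ∀ x₁ ∈ Icc (0:ℝ) 1, ∀ t₂ ∈ Icc (0:ℝ) T,
      ∀ x₂ ∈ Icc (0:ℝ) 1, e t₁ x₁ - e t₂ x₂ ≤
        c⁻¹ * max 1 M * exp (L * T) * (|t₁ - t₂| + |x₁ - x₂|) := by
    intro t₁ ht₁ x₁ hx₁ t₂ ht₂ x₂ hx₂
    obtain ⟨h₁, hbox₁⟩ := hchar t₁ ht₁ x₁ hx₁
    obtain ⟨h₂, hbox₂⟩ := hchar t₂ ht₂ x₂ hx₂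
    obtain ⟨he₂0, he₂t, -⟩ := hef t₂ ht₂ x₂ hx₂
    rcases le_or_gt (e t₁ x₁) (e t₂ x₂) with hle | hlt
    · exact (sub_nonpos.2 hle).trans (by positivity)
    have hcmp := mul_entrance_sub_le h₁ h₂
      (fun s hs => ha_bdd s (hbox₁ s hs).1 _ (hbox₁ s hs).2)
      (fun s hs => ha_bdd s (hbox₂ s hs).1 _ (hbox₂ s hs).2)
      (fun s hs => ha_pos s (hbox₂ s hs).1 _ (hbox₂ s hs).2)
      (fun s hs₁ hs₂ => ha_lip s (hbox₁ s hs₁).1 _ (hbox₁ s hs₁).2 _ (hbox₂ s hs₂).2)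
      (he_exit t₁ ht₁ x₁ hx₁ (he₂0.trans_lt hlt)) (hbox₂ _ ⟨le_rfl, he₂t⟩).2.1 hlt.le
      (hef t₁ ht₁ x₁ hx₁).2.1 he₂t hL.le
    simp only [hφ_init t₁ ht₁ x₁ hx₁, hφ_init t₂ ht₂ x₂ hx₂] at hcmp
    exact le_inv_mul_max_mul_exp_mul hc hL.le (abs_nonneg _) (abs_nonneg _)
      (by linarith [(hef t₁ ht₁ x₁ hx₁).1, ht₁.2]) hcmp
  intro t₁ ht₁ x₁ hx₁ t₂ ht₂ x₂ hx₂
  rw [abs_sub_le_iff]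
  refine ⟨key t₁ ht₁ x₁ hx₁ t₂ ht₂ x₂ hx₂, ?_⟩
  rw [abs_sub_comm t₁, abs_sub_comm x₁]
  exact key t₂ ht₂ x₂ hx₂ t₁ ht₁ x₁ hx₁

/-- The backward entrance time `e` of the flow of a vector field `a ≥ c > 0`,
continuous and uniformly `L`-Lipschitz in `x` and bounded by `M`, is Lipschitz on
`[0,T]×[0,1]` with constant `c⁻¹·max(1,M)·exp(LT)`. -/
theorem stmt_3 (T L M c : ℝ) (hT : 0 < T) (hL : 0 < L) (hM : 0 ≤ M) (hc : 0 < c)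
    (a : ℝ → ℝ → ℝ)
    (ha_cont : ContinuousOn (fun p : ℝ × ℝ => a p.1 p.2)
      (Set.Icc 0 T ×ˢ Set.Icc 0 1))
    (ha_bdd : ∀ t ∈ Set.Icc (0:ℝ) T, ∀ x ∈ Set.Icc (0:ℝ) 1, |a t x| ≤ M)
    (ha_pos : ∀ t ∈ Set.Icc (0:ℝ) T, ∀ x ∈ Set.Icc (0:ℝ) 1, c ≤ a t x)
    (ha_lip : ∀ t ∈ Set.Icc (0:ℝ) T, ∀ x ∈ Set.Icc (0:ℝ) 1, ∀ y ∈ Set.Icc (0:ℝ) 1,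
      |a t x - a t y| ≤ L * |x - y|)
    (φ : ℝ → ℝ → ℝ → ℝ) (e f : ℝ → ℝ → ℝ)
    (hef : ∀ t ∈ Set.Icc (0:ℝ) T, ∀ x ∈ Set.Icc (0:ℝ) 1,
      0 ≤ e t x ∧ e t x ≤ t ∧ t ≤ f t x ∧ f t x ≤ T)
    (hφ_init : ∀ t ∈ Set.Icc (0:ℝ) T, ∀ x ∈ Set.Icc (0:ℝ) 1, φ t t x = x)
    (hφ_mem : ∀ t ∈ Set.Icc (0:ℝ) T, ∀ x ∈ Set.Icc (0:ℝ) 1,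
      ∀ s ∈ Set.Icc (e t x) (f t x), φ s t x ∈ Set.Icc (0:ℝ) 1)
    (hφ_ode : ∀ t ∈ Set.Icc (0:ℝ) T, ∀ x ∈ Set.Icc (0:ℝ) 1,
      ∀ s ∈ Set.Icc (e t x) (f t x),
        HasDerivWithinAt (fun σ => φ σ t x) (a s (φ s t x))
          (Set.Icc (e t x) (f t x)) s)
    -- if the backward characteristic stops before time `0`, it exits through `x = 0`
    (he_exit : ∀ t ∈ Set.Icc (0:ℝ) T, ∀ x ∈ Set.Icc (0:ℝ) 1,
      0 < e t x → φ (e t x) t x = 0) :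
    ∀ t₁ ∈ Set.Icc (0:ℝ) T, ∀ x₁ ∈ Set.Icc (0:ℝ) 1,
    ∀ t₂ ∈ Set.Icc (0:ℝ) T, ∀ x₂ ∈ Set.Icc (0:ℝ) 1,
      |e t₁ x₁ - e t₂ x₂| ≤
        c⁻¹ * max 1 M * Real.exp (L * T) * (|t₁ - t₂| + |x₁ - x₂|) :=
  stmt_3_general T L M c hL hc a ha_bdd ha_pos ha_lip φ e f hef hφ_init hφ_mem hφ_ode he_exit
end

section
/- Let a, aₙ be continuous on [0,T]×[0,1], uniformly Lipschitz in x with a uniform bound on the Lipschitz constants, with a(t,x) ≥ c > 0 and aₙ(t,x) ≥ c > 0, and suppose ‖aₙ - a‖_{C⁰([0,T]×[0,1])} → 0. Let eₙ, e be the corresponding backward entrance times of the flows. If (tₙ,xₙ) → (t,x) in [0,T]×[0,1] and (t,x) does not lie on the characteristic issuing from (0,0), then eₙ(tₙ,xₙ) → e(t,x). -/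
/-!
Along a backward characteristic the speed lies between `c` and `sup a`. If `e(t,x) = t`, then
`t = 0` or `x = 0`, and `max 0 (tₙ - xₙ / c) ≤ eₙ(tₙ,xₙ) ≤ tₙ` squeezes the entrance times.
Otherwise `x > 0`, so for large `n` the characteristics through `(t,x)` and `(tₙ,xₙ)` share the
interval `[max e eₙ, min t tₙ]`. Grönwall's inequality, run backwards from the right end where the
two are close, keeps them within `gronwallBound δ L ε T` of each other there, with `δ` the gap at
the right end and `ε = ‖aₙ - a‖`. At the later of the two entrance times one characteristic is at
height `0`, while the other has been rising at speed at least `c` since its own entrance; hence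
`c · |eₙ - e| ≤ gronwallBound δ L ε T`.
-/

open Set Filter Topology NNReal

theorem mul_sub_le_image_sub_of_le_hasDerivWithinAt {w g : ℝ → ℝ} {α β c : ℝ}
    (hw : ∀ s ∈ Icc α β, HasDerivWithinAt w (g s) (Icc α β) s) (hg : ∀ s ∈ Icc α β, c ≤ g s)
    {r s : ℝ} (hr : r ∈ Icc α β) (hs : s ∈ Icc α β) (hrs : r ≤ s) :
    c * (s - r) ≤ w s - w r := by
  have hd : ∀ σ ∈ Icc α β, HasDerivWithinAt (fun σ => w σ - c * σ) (g σ - c) (Icc α β) σ :=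
    fun σ hσ => (hw σ hσ).sub ((hasDerivWithinAt_id σ _).const_mul c |>.congr_deriv (mul_one c))
  have hmono : MonotoneOn (fun σ => w σ - c * σ) (Icc α β) := by
    refine monotoneOn_of_hasDerivWithinAt_nonneg (f' := fun σ => g σ - c) (convex_Icc α β)
      (fun σ hσ => (hd σ hσ).continuousWithinAt) (fun σ hσ => ?_) (fun σ hσ => ?_)
    · rw [interior_Icc] at hσ ⊢
      exact (hd σ (Ioo_subset_Icc_self hσ)).mono Ioo_subset_Icc_self
    · rw [interior_Icc] at hσ
      exact sub_nonneg.2 (hg σ (Ioo_subset_Icc_self hσ))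
  linarith [hmono hr hs hrs]

theorem image_sub_le_mul_sub_of_hasDerivWithinAt_le {w g : ℝ → ℝ} {α β M : ℝ}
    (hw : ∀ s ∈ Icc α β, HasDerivWithinAt w (g s) (Icc α β) s) (hg : ∀ s ∈ Icc α β, g s ≤ M)
    {r s : ℝ} (hr : r ∈ Icc α β) (hs : s ∈ Icc α β) (hrs : r ≤ s) :
    w s - w r ≤ M * (s - r) := by
  have := mul_sub_le_image_sub_of_le_hasDerivWithinAt (w := fun σ => -w σ) (c := -M)
    (fun σ hσ => (hw σ hσ).neg) (fun σ hσ => neg_le_neg (hg σ hσ)) hr hs hrs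
  linarith

theorem dist_le_of_approx_trajectories_ODE_backward {E : Type*} [NormedAddCommGroup E]
    [NormedSpace ℝ E] {v : ℝ → E → E} {S : Set E} {K : ℝ≥0} {f g g' : ℝ → E} {a b ε δ : ℝ}
    (hv : ∀ t ∈ Icc a b, LipschitzOnWith K (v t) S)
    (hf : ∀ t ∈ Icc a b, HasDerivWithinAt f (v t (f t)) (Icc a b) t)
    (hfs : ∀ t ∈ Icc a b, f t ∈ S)
    (hg : ∀ t ∈ Icc a b, HasDerivWithinAt g (g' t) (Icc a b) t)
    (g_bound : ∀ t ∈ Icc a b, dist (g' t) (v t (g t)) ≤ ε)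
    (hgs : ∀ t ∈ Icc a b, g t ∈ S)
    (hb : dist (f b) (g b) ≤ δ) :
    ∀ t ∈ Icc a b, dist (f t) (g t) ≤ gronwallBound δ K ε (b - t) := by
  have hρ : MapsTo (fun t => a + b - t) (Icc a b) (Icc a b) :=
    fun t ht => ⟨by linarith [ht.2], by linarith [ht.1]⟩
  have reflect : ∀ {h h' : ℝ → E}, (∀ t ∈ Icc a b, HasDerivWithinAt h (h' t) (Icc a b) t) →
      ∀ t ∈ Icc a b, HasDerivWithinAt (fun τ => h (a + b - τ)) (-h' (a + b - t)) (Icc a b) t :=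
    fun hh t ht => by
      simpa [Function.comp_def] using (hh _ (hρ ht)).scomp t
        ((hasDerivWithinAt_id t _).const_sub (a + b)) hρ
  have hf' := reflect hf
  have hg' := reflect hg
  intro t ht
  have := dist_le_of_approx_trajectories_ODE_of_mem (v := fun τ => -v (a + b - τ)) (K := K)
    (εf := 0) (fun τ hτ => (hv _ (hρ (Ico_subset_Icc_self hτ))).neg)
    (fun τ hτ => (hf' τ hτ).continuousWithinAt)
    (fun τ hτ => (hf' τ (Ico_subset_Icc_self hτ)).mono_of_mem_nhdsWithin
      (Icc_mem_nhdsGE_of_mem hτ))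
    (fun τ _ => by simp) (fun τ hτ => hfs _ (hρ (Ico_subset_Icc_self hτ)))
    (fun τ hτ => (hg' τ hτ).continuousWithinAt)
    (fun τ hτ => (hg' τ (Ico_subset_Icc_self hτ)).mono_of_mem_nhdsWithin
      (Icc_mem_nhdsGE_of_mem hτ))
    (fun τ hτ => by simpa using g_bound _ (hρ (Ico_subset_Icc_self hτ)))
    (fun τ hτ => hgs _ (hρ (Ico_subset_Icc_self hτ))) (by simpa using hb) _ (hρ ht)
  simpa [show a + b - t - a = b - t by ring] using this

theorem tendsto_gronwallBound_self (K x : ℝ) :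
    Tendsto (fun ρ => gronwallBound ρ K ρ x) (𝓝 0) (𝓝 0) := by
  have : Continuous fun ρ => gronwallBound ρ K ρ x := by
    unfold gronwallBound; split_ifs <;> fun_prop
  simpa [gronwallBound_ε0_δ0] using this.tendsto 0

theorem tendsto_of_forall_eventually_abs_sub_le {ι : Type*} {l : Filter ι} {u : ι → ℝ} {y : ℝ}
    {g : ℝ → ℝ} (hg : Tendsto g (𝓝[>] 0) (𝓝 0)) (h : ∀ ρ > 0, ∀ᶠ n in l, |u n - y| ≤ g ρ) :
    Tendsto u l (𝓝 y) := by
  rw [Metric.tendsto_nhds]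
  intro η hη
  obtain ⟨ρ, hgρ, hρ⟩ := ((hg.eventually (gt_mem_nhds hη)).and self_mem_nhdsWithin).exists
  filter_upwards [h ρ hρ] with n hn
  exact (Real.dist_eq _ _).trans_le hn |>.trans_lt hgρ

/-- `u = φ^b(·, t, x)` on `[e^b(t, x), t]`. Of the maximality of this interval only its consequence
at a positive entrance time, `u e = 0`, is recorded. -/
structure IsBackwardCharacteristic (b : ℝ → ℝ → ℝ) (u : ℝ → ℝ) (e t x : ℝ) : Prop where
  nonneg : 0 ≤ e
  le : e ≤ t
  mem : ∀ s ∈ Icc e t, u s ∈ Icc (0 : ℝ) 1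
  hasDerivWithinAt : ∀ s ∈ Icc e t, HasDerivWithinAt u (b s (u s)) (Icc e t) s
  apply_right : u t = x
  apply_left : 0 < e → u e = 0

namespace IsBackwardCharacteristic

variable {a b : ℝ → ℝ → ℝ} {u v : ℝ → ℝ} {e E f t t' x x' T c M L ε δ : ℝ}

theorem of_flow (he : 0 ≤ e) (het : e ≤ t) (htf : t ≤ f)
    (hmem : ∀ s ∈ Icc e f, u s ∈ Icc (0 : ℝ) 1)
    (hderiv : ∀ s ∈ Icc e f, HasDerivWithinAt u (b s (u s)) (Icc e f) s)
    (hinit : u t = x) (hentry : 0 < e → u e = 0) : IsBackwardCharacteristic b u e t x where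
  nonneg := he
  le := het
  mem s hs := hmem s (Icc_subset_Icc_right htf hs)
  hasDerivWithinAt s hs := (hderiv s (Icc_subset_Icc_right htf hs)).mono (Icc_subset_Icc_right htf)
  apply_right := hinit
  apply_left := hentry

theorem forall_apply (hu : IsBackwardCharacteristic b u e t x) (htT : t ≤ T) {P : ℝ → ℝ → Prop}
    (hP : ∀ s ∈ Icc (0 : ℝ) T, ∀ y ∈ Icc (0 : ℝ) 1, P s y) : ∀ s ∈ Icc e t, P s (u s) :=
  fun s hs => hP s ⟨hu.nonneg.trans hs.1, hs.2.trans htT⟩ _ (hu.mem s hs)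

theorem mul_sub_le_sub (hu : IsBackwardCharacteristic b u e t x) (htT : t ≤ T)
    (hbc : ∀ s ∈ Icc (0 : ℝ) T, ∀ y ∈ Icc (0 : ℝ) 1, c ≤ b s y) {r s : ℝ}
    (hr : e ≤ r) (hrs : r ≤ s) (hs : s ≤ t) : c * (s - r) ≤ u s - u r :=
  mul_sub_le_image_sub_of_le_hasDerivWithinAt hu.hasDerivWithinAt (hu.forall_apply htT hbc)
    ⟨hr, hrs.trans hs⟩ ⟨hr.trans hrs, hs⟩ hrs

theorem sub_le_mul_sub (hu : IsBackwardCharacteristic b u e t x) (htT : t ≤ T)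
    (hbM : ∀ s ∈ Icc (0 : ℝ) T, ∀ y ∈ Icc (0 : ℝ) 1, b s y ≤ M) {r s : ℝ}
    (hr : e ≤ r) (hrs : r ≤ s) (hs : s ≤ t) : u s - u r ≤ M * (s - r) :=
  image_sub_le_mul_sub_of_hasDerivWithinAt_le hu.hasDerivWithinAt (hu.forall_apply htT hbM)
    ⟨hr, hrs.trans hs⟩ ⟨hr.trans hrs, hs⟩ hrs

theorem sub_div_le (hu : IsBackwardCharacteristic b u e t x) (htT : t ≤ T) (hc : 0 < c)
    (hbc : ∀ s ∈ Icc (0 : ℝ) T, ∀ y ∈ Icc (0 : ℝ) 1, c ≤ b s y) : t - x / c ≤ e := by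
  have hspeed := hu.mul_sub_le_sub htT hbc le_rfl hu.le le_rfl
  have := (hu.mem e ⟨le_rfl, hu.le⟩).1
  rw [hu.apply_right] at hspeed
  rw [sub_le_comm, le_div_iff₀ hc]
  linarith

theorem pos_of_lt (hu : IsBackwardCharacteristic b u e t x) (htT : t ≤ T) (hc : 0 < c)
    (hbc : ∀ s ∈ Icc (0 : ℝ) T, ∀ y ∈ Icc (0 : ℝ) 1, c ≤ b s y) (het : e < t) : 0 < x := by
  have := hu.sub_div_le htT hc hbc
  by_contra! h
  linarith [div_nonpos_of_nonpos_of_nonneg h hc.le]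

theorem max_zero_sub_div_eq (hu : IsBackwardCharacteristic b u e t x) (htT : t ≤ T) (hc : 0 < c)
    (hbc : ∀ s ∈ Icc (0 : ℝ) T, ∀ y ∈ Icc (0 : ℝ) 1, c ≤ b s y) (het : e = t) :
    max 0 (t - x / c) = e := by
  refine le_antisymm (max_le hu.nonneg (hu.sub_div_le htT hc hbc)) ?_
  rcases hu.nonneg.eq_or_lt with he0 | he0
  · exact he0 ▸ le_max_left _ _
  · have hx0 : x = 0 := by rw [← hu.apply_right, ← het, hu.apply_left he0]
    simp [hx0, het]

theorem abs_apply_sub_le (hu : IsBackwardCharacteristic b u e t x) (htT : t ≤ T) (hc : 0 ≤ c)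
    (hbc : ∀ s ∈ Icc (0 : ℝ) T, ∀ y ∈ Icc (0 : ℝ) 1, c ≤ b s y)
    (hbM : ∀ s ∈ Icc (0 : ℝ) T, ∀ y ∈ Icc (0 : ℝ) 1, b s y ≤ M) {s : ℝ} (hs : s ∈ Icc e t) :
    |u s - x| ≤ M * (t - s) := by
  have hlo := hu.mul_sub_le_sub htT hbc hs.1 hs.2 le_rfl
  have hhi := hu.sub_le_mul_sub htT hbM hs.1 hs.2 le_rfl
  rw [hu.apply_right] at hlo hhi
  rw [abs_sub_comm, abs_of_nonneg (by nlinarith [hs.2])]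
  exact hhi

theorem le_of_mul_sub_lt (hu : IsBackwardCharacteristic b u e t x) (htT : t ≤ T) (hM : 0 ≤ M)
    (hbM : ∀ s ∈ Icc (0 : ℝ) T, ∀ y ∈ Icc (0 : ℝ) 1, b s y ≤ M) {t₀ : ℝ} (ht₀ : 0 ≤ t₀)
    (h : M * (t - t₀) < x) : e ≤ t₀ := by
  by_contra! hlt
  have hspeed := hu.sub_le_mul_sub htT hbM le_rfl hu.le le_rfl
  rw [hu.apply_right, hu.apply_left (ht₀.trans_lt hlt)] at hspeed
  nlinarith

theorem mul_sub_le_abs_sub (hu : IsBackwardCharacteristic a u e t x)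
    (hv : IsBackwardCharacteristic b v E t' x') (htT : t ≤ T)
    (hac : ∀ s ∈ Icc (0 : ℝ) T, ∀ y ∈ Icc (0 : ℝ) 1, c ≤ a s y)
    (heE : e ≤ E) (hEt : E ≤ t) : c * (E - e) ≤ |u E - v E| := by
  rcases heE.eq_or_lt with rfl | hlt
  · simp
  have hspeed := hu.mul_sub_le_sub htT hac le_rfl heE hEt
  have := (hu.mem e ⟨le_rfl, hu.le⟩).1
  rw [hv.apply_left (hu.nonneg.trans_lt hlt), sub_zero]
  exact hspeed.trans ((sub_le_self _ this).trans (le_abs_self _))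

theorem abs_apply_min_sub_le (hu : IsBackwardCharacteristic a u e t x)
    (hv : IsBackwardCharacteristic b v E t' x') (htT : t ≤ T) (ht'T : t' ≤ T) (hc : 0 ≤ c)
    (hac : ∀ s ∈ Icc (0 : ℝ) T, ∀ y ∈ Icc (0 : ℝ) 1, c ≤ a s y)
    (haM : ∀ s ∈ Icc (0 : ℝ) T, ∀ y ∈ Icc (0 : ℝ) 1, a s y ≤ M)
    (hbc : ∀ s ∈ Icc (0 : ℝ) T, ∀ y ∈ Icc (0 : ℝ) 1, c ≤ b s y)
    (hbM : ∀ s ∈ Icc (0 : ℝ) T, ∀ y ∈ Icc (0 : ℝ) 1, b s y ≤ M)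
    (het' : e ≤ t') (hEt : E ≤ t) :
    |u (min t t') - v (min t t')| ≤ |x' - x| + M * |t' - t| := by
  have hu_m := hu.abs_apply_sub_le htT hc hac haM ⟨le_min hu.le het', min_le_left _ _⟩
  have hv_m := hv.abs_apply_sub_le ht'T hc hbc hbM ⟨le_min hEt hv.le, min_le_right _ _⟩
  have hgap : M * (t - min t t') + M * (t' - min t t') = M * |t' - t| := by
    rcases le_total t t' with h | h
    · rw [min_eq_left h, abs_of_nonneg (sub_nonneg.2 h)]; ring
    · rw [min_eq_right h, abs_of_nonpos (sub_nonpos.2 h)]; ring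
  have h1 := abs_sub_le (u (min t t')) x (v (min t t'))
  have h2 := abs_sub_le x x' (v (min t t'))
  rw [abs_sub_comm x x', abs_sub_comm x' (v (min t t'))] at h2
  linarith

theorem abs_sub_le_gronwallBound (hu : IsBackwardCharacteristic a u e t x)
    (hv : IsBackwardCharacteristic b v E t' x') (htT : t ≤ T) (ht'T : t' ≤ T) (hc : 0 < c)
    (hL : 0 ≤ L) (hac : ∀ s ∈ Icc (0 : ℝ) T, ∀ y ∈ Icc (0 : ℝ) 1, c ≤ a s y)
    (haM : ∀ s ∈ Icc (0 : ℝ) T, ∀ y ∈ Icc (0 : ℝ) 1, a s y ≤ M)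
    (hbc : ∀ s ∈ Icc (0 : ℝ) T, ∀ y ∈ Icc (0 : ℝ) 1, c ≤ b s y)
    (hbM : ∀ s ∈ Icc (0 : ℝ) T, ∀ y ∈ Icc (0 : ℝ) 1, b s y ≤ M)
    (ha_lip : ∀ s ∈ Icc (0 : ℝ) T, ∀ y ∈ Icc (0 : ℝ) 1, ∀ z ∈ Icc (0 : ℝ) 1,
      |a s y - a s z| ≤ L * |y - z|)
    (hba : ∀ s ∈ Icc (0 : ℝ) T, ∀ y ∈ Icc (0 : ℝ) 1, |b s y - a s y| ≤ ε)
    (het' : e ≤ t') (hEt : E ≤ t) (hδ : |x' - x| + M * |t' - t| ≤ δ) :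
    |E - e| ≤ gronwallBound δ L ε T / c := by
  set m := min t t'
  set r := max e E
  have hu_sub : Icc r m ⊆ Icc e t := Icc_subset_Icc (le_max_left _ _) (min_le_left _ _)
  have hv_sub : Icc r m ⊆ Icc E t' := Icc_subset_Icc (le_max_right _ _) (min_le_right _ _)
  have hbox : Icc r m ⊆ Icc 0 T :=
    Icc_subset_Icc (hu.nonneg.trans (le_max_left _ _)) ((min_le_left _ _).trans htT)
  have hm : m ∈ Icc r m := ⟨max_le (le_min hu.le het') (le_min hEt hv.le), le_rfl⟩
  have hanchor : |u m - v m| ≤ δ :=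
    (hu.abs_apply_min_sub_le hv htT ht'T hc.le hac haM hbc hbM het' hEt).trans hδ
  have hε : 0 ≤ ε := (abs_nonneg _).trans (hba m (hbox hm) 0 ⟨le_rfl, zero_le_one⟩)
  have hlip : ∀ s ∈ Icc r m, LipschitzOnWith ⟨L, hL⟩ (a s) (Icc 0 1) := fun s hs =>
    LipschitzOnWith.of_dist_le_mul fun y hy z hz => by
      rw [Real.dist_eq, Real.dist_eq]; exact ha_lip s (hbox hs) y hy z hz
  have hclose : ∀ s ∈ Icc r m, |u s - v s| ≤ gronwallBound δ L ε T := fun s hs => by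
    have := dist_le_of_approx_trajectories_ODE_backward (δ := δ) hlip
      (fun s hs => (hu.hasDerivWithinAt s (hu_sub hs)).mono hu_sub)
      (fun s hs => hu.mem s (hu_sub hs))
      (fun s hs => (hv.hasDerivWithinAt s (hv_sub hs)).mono hv_sub)
      (fun s hs => by simpa [Real.dist_eq] using hba s (hbox hs) _ (hv.mem s (hv_sub hs)))
      (fun s hs => hv.mem s (hv_sub hs)) (by rwa [Real.dist_eq]) s hs
    rw [Real.dist_eq] at this
    exact this.trans (gronwallBound_mono ((abs_nonneg _).trans hanchor) hε hL
      (by linarith [hs.1, (hbox hs).1, (hbox hm).2]))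
  rw [le_div_iff₀ hc, abs_sub_comm]
  rcases le_total e E with heE | hEe
  · rw [abs_of_nonpos (by linarith), mul_comm]
    have hE : E ∈ Icc r m := ⟨max_le heE le_rfl, le_min hEt hv.le⟩
    linarith [hu.mul_sub_le_abs_sub hv htT hac heE hEt, hclose E hE]
  · rw [abs_of_nonneg (by linarith), mul_comm]
    have he : e ∈ Icc r m := ⟨max_le le_rfl hEe, le_min hu.le het'⟩
    have := hv.mul_sub_le_abs_sub hu ht'T hbc hEe het'
    rw [abs_sub_comm] at this
    linarith [hclose e he]

section Sequences

variable {ι : Type*} {l : Filter ι} {B : ι → ℝ → ℝ → ℝ} {V : ι → ℝ → ℝ} {Eₙ tₙ xₙ : ι → ℝ}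

theorem tendsto_entrance_of_eq (hu : IsBackwardCharacteristic a u e t x)
    (hv : ∀ n, IsBackwardCharacteristic (B n) (V n) (Eₙ n) (tₙ n) (xₙ n))
    (htT : t ≤ T) (htₙT : ∀ n, tₙ n ≤ T) (hc : 0 < c)
    (hac : ∀ s ∈ Icc (0 : ℝ) T, ∀ y ∈ Icc (0 : ℝ) 1, c ≤ a s y)
    (hBc : ∀ n, ∀ s ∈ Icc (0 : ℝ) T, ∀ y ∈ Icc (0 : ℝ) 1, c ≤ B n s y)
    (htt : Tendsto tₙ l (𝓝 t)) (hxx : Tendsto xₙ l (𝓝 x)) (het : e = t) :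
    Tendsto Eₙ l (𝓝 e) := by
  refine tendsto_of_tendsto_of_tendsto_of_le_of_le (g := fun n => max 0 (tₙ n - xₙ n / c))
    (h := tₙ) ?_ ?_ (fun n => max_le (hv n).nonneg ((hv n).sub_div_le (htₙT n) hc (hBc n)))
    (fun n => (hv n).le)
  · rw [← hu.max_zero_sub_div_eq htT hc hac het]
    exact tendsto_const_nhds.max (htt.sub (hxx.div_const c))
  · rwa [het]

theorem tendsto_entrance_of_lt (hu : IsBackwardCharacteristic a u e t x)
    (hv : ∀ n, IsBackwardCharacteristic (B n) (V n) (Eₙ n) (tₙ n) (xₙ n))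
    (htT : t ≤ T) (htₙT : ∀ n, tₙ n ≤ T) (hc : 0 < c) (hL : 0 ≤ L)
    (hac : ∀ s ∈ Icc (0 : ℝ) T, ∀ y ∈ Icc (0 : ℝ) 1, c ≤ a s y)
    (haM : ∀ s ∈ Icc (0 : ℝ) T, ∀ y ∈ Icc (0 : ℝ) 1, a s y ≤ M)
    (hBc : ∀ n, ∀ s ∈ Icc (0 : ℝ) T, ∀ y ∈ Icc (0 : ℝ) 1, c ≤ B n s y)
    (hBM : ∀ᶠ n in l, ∀ s ∈ Icc (0 : ℝ) T, ∀ y ∈ Icc (0 : ℝ) 1, B n s y ≤ M)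
    (ha_lip : ∀ s ∈ Icc (0 : ℝ) T, ∀ y ∈ Icc (0 : ℝ) 1, ∀ z ∈ Icc (0 : ℝ) 1,
      |a s y - a s z| ≤ L * |y - z|)
    (hBa : ∀ ε > 0, ∀ᶠ n in l, ∀ s ∈ Icc (0 : ℝ) T, ∀ y ∈ Icc (0 : ℝ) 1, |B n s y - a s y| ≤ ε)
    (htt : Tendsto tₙ l (𝓝 t)) (hxx : Tendsto xₙ l (𝓝 x)) (het : e < t) :
    Tendsto Eₙ l (𝓝 e) := by
  have hM : 0 ≤ M := hc.le.trans <| (hu.forall_apply htT hac t ⟨hu.le, le_rfl⟩).trans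
    (hu.forall_apply htT haM t ⟨hu.le, le_rfl⟩)
  have h_et : ∀ᶠ n in l, e ≤ tₙ n := htt.eventually (eventually_ge_nhds het)
  have h_Et : ∀ᶠ n in l, M * (tₙ n - t) < xₙ n := by
    have : Tendsto (fun n => xₙ n - M * (tₙ n - t)) l (𝓝 x) := by
      simpa using hxx.sub ((htt.sub_const t).const_mul M)
    filter_upwards [this.eventually (eventually_gt_nhds (hu.pos_of_lt htT hc hac het))] with n hn
    linarith
  have h_δ : Tendsto (fun n => |xₙ n - x| + M * |tₙ n - t|) l (𝓝 0) := by
    simpa using (hxx.sub_const x).abs.add ((htt.sub_const t).abs.const_mul M)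
  refine tendsto_of_forall_eventually_abs_sub_le (g := fun ρ => gronwallBound ρ L ρ T / c)
    (by simpa using ((tendsto_gronwallBound_self L T).div_const c).mono_left nhdsWithin_le_nhds)
    fun ρ hρ => ?_
  filter_upwards [hBM, hBa ρ hρ, h_et, h_Et, h_δ.eventually (eventually_le_nhds hρ)]
    with n hBMn hBan h_et h_Et h_δ
  exact hu.abs_sub_le_gronwallBound (hv n) htT (htₙT n) hc hL hac haM (hBc n) hBMn ha_lip hBan
    h_et ((hv n).le_of_mul_sub_lt (htₙT n) hM hBMn (hu.nonneg.trans hu.le) h_Et) h_δ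

end Sequences

end IsBackwardCharacteristic

theorem stmt_4_general (T L c : ℝ) (hL : 0 < L) (hc : 0 < c)
    (a : ℝ → ℝ → ℝ) (A : ℕ → ℝ → ℝ → ℝ)
    (φ : ℝ → ℝ → ℝ → ℝ) (e f : ℝ → ℝ → ℝ)
    (Φ : ℕ → ℝ → ℝ → ℝ → ℝ) (E F : ℕ → ℝ → ℝ → ℝ)
    -- regularity and bounds for `a` and the `aₙ`
    (ha_cont : ContinuousOn (fun p : ℝ × ℝ => a p.1 p.2) (Set.Icc 0 T ×ˢ Set.Icc 0 1))
    (ha_pos : ∀ t ∈ Set.Icc (0:ℝ) T, ∀ x ∈ Set.Icc (0:ℝ) 1, c ≤ a t x)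
    (hA_pos : ∀ n, ∀ t ∈ Set.Icc (0:ℝ) T, ∀ x ∈ Set.Icc (0:ℝ) 1, c ≤ A n t x)
    (ha_lip : ∀ t ∈ Set.Icc (0:ℝ) T, ∀ x ∈ Set.Icc (0:ℝ) 1, ∀ y ∈ Set.Icc (0:ℝ) 1,
      |a t x - a t y| ≤ L * |x - y|)
    -- uniform convergence `aₙ → a` on `[0,T]×[0,1]`
    (hconv : ∀ ε > (0:ℝ), ∃ N : ℕ, ∀ n ≥ N, ∀ t ∈ Set.Icc (0:ℝ) T, ∀ x ∈ Set.Icc (0:ℝ) 1,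
      |A n t x - a t x| ≤ ε)
    -- `φ` is the flow of `a`, defined on `[e(t,x), f(t,x)] ⊆ [0,T]`
    (hef : ∀ t ∈ Set.Icc (0:ℝ) T, ∀ x ∈ Set.Icc (0:ℝ) 1,
      0 ≤ e t x ∧ e t x ≤ t ∧ t ≤ f t x ∧ f t x ≤ T)
    (hφ_init : ∀ t ∈ Set.Icc (0:ℝ) T, ∀ x ∈ Set.Icc (0:ℝ) 1, φ t t x = x)
    (hφ_mem : ∀ t ∈ Set.Icc (0:ℝ) T, ∀ x ∈ Set.Icc (0:ℝ) 1,
      ∀ s ∈ Set.Icc (e t x) (f t x), φ s t x ∈ Set.Icc (0:ℝ) 1)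
    (hφ_ode : ∀ t ∈ Set.Icc (0:ℝ) T, ∀ x ∈ Set.Icc (0:ℝ) 1,
      ∀ s ∈ Set.Icc (e t x) (f t x),
        HasDerivWithinAt (fun σ => φ σ t x) (a s (φ s t x)) (Set.Icc (e t x) (f t x)) s)
    (he_exit : ∀ t ∈ Set.Icc (0:ℝ) T, ∀ x ∈ Set.Icc (0:ℝ) 1,
      0 < e t x → φ (e t x) t x = 0)
    -- `Φ n` is the flow of `A n`, defined on `[E n (t,x), F n (t,x)] ⊆ [0,T]`
    (hEF : ∀ n, ∀ t ∈ Set.Icc (0:ℝ) T, ∀ x ∈ Set.Icc (0:ℝ) 1,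
      0 ≤ E n t x ∧ E n t x ≤ t ∧ t ≤ F n t x ∧ F n t x ≤ T)
    (hΦ_init : ∀ n, ∀ t ∈ Set.Icc (0:ℝ) T, ∀ x ∈ Set.Icc (0:ℝ) 1, Φ n t t x = x)
    (hΦ_mem : ∀ n, ∀ t ∈ Set.Icc (0:ℝ) T, ∀ x ∈ Set.Icc (0:ℝ) 1,
      ∀ s ∈ Set.Icc (E n t x) (F n t x), Φ n s t x ∈ Set.Icc (0:ℝ) 1)
    (hΦ_ode : ∀ n, ∀ t ∈ Set.Icc (0:ℝ) T, ∀ x ∈ Set.Icc (0:ℝ) 1,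
      ∀ s ∈ Set.Icc (E n t x) (F n t x),
        HasDerivWithinAt (fun σ => Φ n σ t x) (A n s (Φ n s t x))
          (Set.Icc (E n t x) (F n t x)) s)
    (hE_exit : ∀ n, ∀ t ∈ Set.Icc (0:ℝ) T, ∀ x ∈ Set.Icc (0:ℝ) 1,
      0 < E n t x → Φ n (E n t x) t x = 0)
    -- the base points
    (t x : ℝ) (ht : t ∈ Set.Icc (0:ℝ) T) (hx : x ∈ Set.Icc (0:ℝ) 1)
    (tseq xseq : ℕ → ℝ)
    (htseq : ∀ n, tseq n ∈ Set.Icc (0:ℝ) T) (hxseq : ∀ n, xseq n ∈ Set.Icc (0:ℝ) 1)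
    (hlim : Filter.Tendsto (fun n => (tseq n, xseq n)) Filter.atTop (nhds (t, x))) :
    Filter.Tendsto (fun n => E n (tseq n) (xseq n)) Filter.atTop (nhds (e t x)) := by
  have hu : IsBackwardCharacteristic a (φ · t x) (e t x) t x :=
    let ⟨he0, het, htf, _⟩ := hef t ht x hx
    .of_flow he0 het htf (hφ_mem t ht x hx) (hφ_ode t ht x hx) (hφ_init t ht x hx)
      (he_exit t ht x hx)
  have hv : ∀ n, IsBackwardCharacteristic (A n) (Φ n · (tseq n) (xseq n))
      (E n (tseq n) (xseq n)) (tseq n) (xseq n) := fun n =>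
    let ⟨hE0, hEt, htF, _⟩ := hEF n _ (htseq n) _ (hxseq n)
    .of_flow hE0 hEt htF (hΦ_mem n _ (htseq n) _ (hxseq n)) (hΦ_ode n _ (htseq n) _ (hxseq n))
      (hΦ_init n _ (htseq n) _ (hxseq n)) (hE_exit n _ (htseq n) _ (hxseq n))
  have htt : Tendsto tseq atTop (𝓝 t) := (continuous_fst.tendsto _).comp hlim
  have hxx : Tendsto xseq atTop (𝓝 x) := (continuous_snd.tendsto _).comp hlim
  have htseqT n := (htseq n).2
  rcases hu.le.eq_or_lt with het | het
  · exact hu.tendsto_entrance_of_eq hv ht.2 htseqT hc ha_pos hA_pos htt hxx het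
  obtain ⟨M, haM⟩ : ∃ M, ∀ s ∈ Icc (0 : ℝ) T, ∀ y ∈ Icc (0 : ℝ) 1, a s y ≤ M := by
    obtain ⟨M, hM⟩ := (isCompact_Icc.prod isCompact_Icc).exists_bound_of_continuousOn ha_cont
    exact ⟨M, fun s hs y hy => (le_abs_self _).trans (hM (s, y) ⟨hs, hy⟩)⟩
  have hAa : ∀ ε > 0, ∀ᶠ n in atTop, ∀ s ∈ Icc (0 : ℝ) T, ∀ y ∈ Icc (0 : ℝ) 1,
      |A n s y - a s y| ≤ ε := fun ε hε => eventually_atTop.2 (hconv ε hε)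
  have hAM : ∀ᶠ n in atTop, ∀ s ∈ Icc (0 : ℝ) T, ∀ y ∈ Icc (0 : ℝ) 1, A n s y ≤ M + 1 :=
    (hAa 1 one_pos).mono fun n hn s hs y hy => by
      linarith [(abs_le.1 (hn s hs y hy)).2, haM s hs y hy]
  exact hu.tendsto_entrance_of_lt hv ht.2 htseqT hc hL.le ha_pos
    (fun s hs y hy => (haM s hs y hy).trans (le_add_of_nonneg_right zero_le_one)) hA_pos hAM
    ha_lip hAa htt hxx het

/-- Continuity of the backward entrance time with respect to the vector field and
the base point, away from the characteristic issuing from `(0,0)`: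
if `aₙ → a` uniformly, with uniform Lipschitz bound in `x` and uniform lower bound
`c > 0`, and `(tₙ,xₙ) → (t,x)` with `(t,x)` not on the characteristic through `(0,0)`,
then `eₙ(tₙ,xₙ) → e(t,x)`. -/
theorem stmt_4 (T L c : ℝ) (hT : 0 < T) (hL : 0 < L) (hc : 0 < c)
    (a : ℝ → ℝ → ℝ) (A : ℕ → ℝ → ℝ → ℝ)
    (φ : ℝ → ℝ → ℝ → ℝ) (e f : ℝ → ℝ → ℝ)
    (Φ : ℕ → ℝ → ℝ → ℝ → ℝ) (E F : ℕ → ℝ → ℝ → ℝ)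
    -- regularity and bounds for `a` and the `aₙ`
    (ha_cont : ContinuousOn (fun p : ℝ × ℝ => a p.1 p.2) (Set.Icc 0 T ×ˢ Set.Icc 0 1))
    (hA_cont : ∀ n, ContinuousOn (fun p : ℝ × ℝ => A n p.1 p.2) (Set.Icc 0 T ×ˢ Set.Icc 0 1))
    (ha_pos : ∀ t ∈ Set.Icc (0:ℝ) T, ∀ x ∈ Set.Icc (0:ℝ) 1, c ≤ a t x)
    (hA_pos : ∀ n, ∀ t ∈ Set.Icc (0:ℝ) T, ∀ x ∈ Set.Icc (0:ℝ) 1, c ≤ A n t x)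
    (ha_lip : ∀ t ∈ Set.Icc (0:ℝ) T, ∀ x ∈ Set.Icc (0:ℝ) 1, ∀ y ∈ Set.Icc (0:ℝ) 1,
      |a t x - a t y| ≤ L * |x - y|)
    (hA_lip : ∀ n, ∀ t ∈ Set.Icc (0:ℝ) T, ∀ x ∈ Set.Icc (0:ℝ) 1, ∀ y ∈ Set.Icc (0:ℝ) 1,
      |A n t x - A n t y| ≤ L * |x - y|)
    -- uniform convergence `aₙ → a` on `[0,T]×[0,1]`
    (hconv : ∀ ε > (0:ℝ), ∃ N : ℕ, ∀ n ≥ N, ∀ t ∈ Set.Icc (0:ℝ) T, ∀ x ∈ Set.Icc (0:ℝ) 1,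
      |A n t x - a t x| ≤ ε)
    -- `φ` is the flow of `a`, defined on `[e(t,x), f(t,x)] ⊆ [0,T]`
    (hef : ∀ t ∈ Set.Icc (0:ℝ) T, ∀ x ∈ Set.Icc (0:ℝ) 1,
      0 ≤ e t x ∧ e t x ≤ t ∧ t ≤ f t x ∧ f t x ≤ T)
    (hφ_init : ∀ t ∈ Set.Icc (0:ℝ) T, ∀ x ∈ Set.Icc (0:ℝ) 1, φ t t x = x)
    (hφ_mem : ∀ t ∈ Set.Icc (0:ℝ) T, ∀ x ∈ Set.Icc (0:ℝ) 1,
      ∀ s ∈ Set.Icc (e t x) (f t x), φ s t x ∈ Set.Icc (0:ℝ) 1)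
    (hφ_ode : ∀ t ∈ Set.Icc (0:ℝ) T, ∀ x ∈ Set.Icc (0:ℝ) 1,
      ∀ s ∈ Set.Icc (e t x) (f t x),
        HasDerivWithinAt (fun σ => φ σ t x) (a s (φ s t x)) (Set.Icc (e t x) (f t x)) s)
    (he_exit : ∀ t ∈ Set.Icc (0:ℝ) T, ∀ x ∈ Set.Icc (0:ℝ) 1,
      0 < e t x → φ (e t x) t x = 0)
    (hf_exit : ∀ t ∈ Set.Icc (0:ℝ) T, ∀ x ∈ Set.Icc (0:ℝ) 1,
      f t x < T → φ (f t x) t x = 1)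
    -- `Φ n` is the flow of `A n`, defined on `[E n (t,x), F n (t,x)] ⊆ [0,T]`
    (hEF : ∀ n, ∀ t ∈ Set.Icc (0:ℝ) T, ∀ x ∈ Set.Icc (0:ℝ) 1,
      0 ≤ E n t x ∧ E n t x ≤ t ∧ t ≤ F n t x ∧ F n t x ≤ T)
    (hΦ_init : ∀ n, ∀ t ∈ Set.Icc (0:ℝ) T, ∀ x ∈ Set.Icc (0:ℝ) 1, Φ n t t x = x)
    (hΦ_mem : ∀ n, ∀ t ∈ Set.Icc (0:ℝ) T, ∀ x ∈ Set.Icc (0:ℝ) 1,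
      ∀ s ∈ Set.Icc (E n t x) (F n t x), Φ n s t x ∈ Set.Icc (0:ℝ) 1)
    (hΦ_ode : ∀ n, ∀ t ∈ Set.Icc (0:ℝ) T, ∀ x ∈ Set.Icc (0:ℝ) 1,
      ∀ s ∈ Set.Icc (E n t x) (F n t x),
        HasDerivWithinAt (fun σ => Φ n σ t x) (A n s (Φ n s t x))
          (Set.Icc (E n t x) (F n t x)) s)
    (hE_exit : ∀ n, ∀ t ∈ Set.Icc (0:ℝ) T, ∀ x ∈ Set.Icc (0:ℝ) 1,
      0 < E n t x → Φ n (E n t x) t x = 0)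
    (hF_exit : ∀ n, ∀ t ∈ Set.Icc (0:ℝ) T, ∀ x ∈ Set.Icc (0:ℝ) 1,
      F n t x < T → Φ n (F n t x) t x = 1)
    -- the base points
    (t x : ℝ) (ht : t ∈ Set.Icc (0:ℝ) T) (hx : x ∈ Set.Icc (0:ℝ) 1)
    (tseq xseq : ℕ → ℝ)
    (htseq : ∀ n, tseq n ∈ Set.Icc (0:ℝ) T) (hxseq : ∀ n, xseq n ∈ Set.Icc (0:ℝ) 1)
    (hlim : Filter.Tendsto (fun n => (tseq n, xseq n)) Filter.atTop (nhds (t, x)))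
    -- `(t,x)` is not on the characteristic issuing from `(0,0)`
    (hP : ¬ ∃ s ∈ Set.Icc (0:ℝ) (f 0 0), t = s ∧ x = φ s 0 0) :
    Filter.Tendsto (fun n => E n (tseq n) (xseq n)) Filter.atTop (nhds (e t x)) :=
  stmt_4_general T L c hL hc a A φ e f Φ E F ha_cont ha_pos hA_pos ha_lip hconv hef hφ_init hφ_mem
    hφ_ode he_exit hEF hΦ_init hΦ_mem hΦ_ode hE_exit t x ht hx tseq xseq htseq hxseq hlim
end

section
/- Let a be continuous on [0,T]×[0,1] with ∂_x a ∈ L^∞ and a ≥ c > 0, let y_l and y₀ be uniformly Lipschitz with constants L_l and L₀ respectively and y_l(0) = y₀(0). Then the function y defined by y(t,x) = y_l(e(t,x)) on J and y(t,x) = y₀(φ(0,t,x)) on I ∪ P is Lipschitz continuous on [0,T]×[0,1] with Lipschitz constant M = max(L_l/c, L₀)·max(1, ‖a‖_{C⁰})·e^{LT}, where L = ‖∂_x a‖_{L^∞}. -/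
/-!
Write `zᵢ = φ(eᵢ, tᵢ, xᵢ)` for the entrance point of the characteristic through `(tᵢ, xᵢ)`.
Since `yl 0 = y₀ 0`, on both `J` and `I ∪ P` we have `y = yl(e) + y₀(z) - yl(0)`, so
`|y₁ - y₂| ≤ max(Ll/c, L₀) (c |e₁ - e₂| + |z₁ - z₂|)`. For `t₁ ≤ t₂`, if both characteristics
live on `[max e₁ e₂, t₁]`, the speed bound `a ≥ c` gives `c |e₁ - e₂| + |z₁ - z₂| ≤` their gap at
time `max e₁ e₂`, which backward Grönwall bounds by `e^{LT}` times their gap at time `t₁`, and that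
is at most `|x₁ - x₂| + ‖a‖ (t₂ - t₁)`. Otherwise the second characteristic enters through `x = 0`
after `t₁`, and the speed bounds `c ≤ a ≤ ‖a‖` alone give the estimate.
-/

open Set Real

theorem mul_sub_le_image_sub_of_le_hasDerivWithinAt_s9 {f f' : ℝ → ℝ} {α β C : ℝ}
    (hf : ∀ s ∈ Icc α β, HasDerivWithinAt f (f' s) (Icc α β) s)
    (hC : ∀ s ∈ Icc α β, C ≤ f' s) {u v : ℝ} (hu : u ∈ Icc α β) (hv : v ∈ Icc α β)
    (huv : u ≤ v) : C * (v - u) ≤ f v - f u := by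
  have hg : ∀ s ∈ Icc α β,
      HasDerivWithinAt (fun s => f s - C * s) (f' s - C * 1) (Icc α β) s :=
    fun s hs => (hf s hs).sub ((hasDerivWithinAt_id s _).const_mul C)
  have hmono : MonotoneOn (fun s => f s - C * s) (Icc α β) :=
    monotoneOn_of_hasDerivWithinAt_nonneg (convex_Icc α β)
      (fun s hs => (hg s hs).continuousWithinAt)
      (fun s hs => (hg s (interior_subset hs)).mono interior_subset)
      (fun s hs => by linarith [hC s (interior_subset hs)])
  linarith [hmono hu hv huv]

theorem abs_sub_le_mul_exp_of_trajectories_backward {v : ℝ → ℝ → ℝ} {S : Set ℝ} {L α β : ℝ}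
    (hL : 0 ≤ L) (hv : ∀ s ∈ Icc α β, ∀ x ∈ S, ∀ x' ∈ S, |v s x - v s x'| ≤ L * |x - x'|)
    {ψ₁ ψ₂ : ℝ → ℝ}
    (hψ₁ : ∀ s ∈ Icc α β, HasDerivWithinAt ψ₁ (v s (ψ₁ s)) (Icc α β) s)
    (hψ₂ : ∀ s ∈ Icc α β, HasDerivWithinAt ψ₂ (v s (ψ₂ s)) (Icc α β) s)
    (hψ₁S : ∀ s ∈ Icc α β, ψ₁ s ∈ S) (hψ₂S : ∀ s ∈ Icc α β, ψ₂ s ∈ S) :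
    ∀ s ∈ Icc α β, |ψ₁ s - ψ₂ s| ≤ |ψ₁ β - ψ₂ β| * exp (L * (β - s)) := by
  -- apply the forward estimate to the time-reversed trajectories `u ↦ ψᵢ (-u)`
  have hneg : MapsTo (fun u => -u) (Icc (-β) (-α)) (Icc α β) :=
    fun u hu => ⟨by linarith [hu.2], by linarith [hu.1]⟩
  have hrev : ∀ ψ : ℝ → ℝ, (∀ s ∈ Icc α β, HasDerivWithinAt ψ (v s (ψ s)) (Icc α β) s) →
      ∀ u ∈ Icc (-β) (-α),
        HasDerivWithinAt (fun u => ψ (-u)) (-v (-u) (ψ (-u))) (Icc (-β) (-α)) u := by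
    intro ψ hψ u hu
    have h := (hψ (-u) (hneg hu)).comp u (hasDerivAt_neg u).hasDerivWithinAt hneg
    rwa [mul_neg_one] at h
  have hlip : ∀ u ∈ Ico (-β) (-α), LipschitzOnWith ⟨L, hL⟩ (fun x => -v (-u) x) S :=
    fun u hu => LipschitzOnWith.of_dist_le_mul fun x hx x' hx' => by
      rw [dist_neg_neg, Real.dist_eq, Real.dist_eq]
      exact hv (-u) (hneg (Ico_subset_Icc_self hu)) x hx x' hx'
  have key := dist_le_of_trajectories_ODE_of_mem (v := fun u x => -v (-u) x) (s := fun _ => S)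
    (f := fun u => ψ₁ (-u)) (g := fun u => ψ₂ (-u)) hlip
    (fun u hu => (hrev ψ₁ hψ₁ u hu).continuousWithinAt)
    (fun u hu => (hrev ψ₁ hψ₁ u (Ico_subset_Icc_self hu)).mono_of_mem_nhdsWithin
      (Icc_mem_nhdsGE_of_mem hu))
    (fun u hu => hψ₁S _ (hneg (Ico_subset_Icc_self hu)))
    (fun u hu => (hrev ψ₂ hψ₂ u hu).continuousWithinAt)
    (fun u hu => (hrev ψ₂ hψ₂ u (Ico_subset_Icc_self hu)).mono_of_mem_nhdsWithin
      (Icc_mem_nhdsGE_of_mem hu))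
    (fun u hu => hψ₂S _ (hneg (Ico_subset_Icc_self hu))) le_rfl
  intro s hs
  have := key (-s) ⟨by linarith [hs.2], by linarith [hs.1]⟩
  simp only [neg_neg, Real.dist_eq] at this
  rwa [show -s - -β = β - s by ring] at this

structure IsBackwardCharacteristic_s9 (a : ℝ → ℝ → ℝ) (T t x e : ℝ) (ψ : ℝ → ℝ) : Prop where
  entry_nonneg : 0 ≤ e
  entry_le : e ≤ t
  le_horizon : t ≤ T
  apply_self : ψ t = x
  mem_Icc : ∀ s ∈ Icc e t, ψ s ∈ Icc (0 : ℝ) 1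
  hasDerivWithinAt : ∀ s ∈ Icc e t, HasDerivWithinAt ψ (a s (ψ s)) (Icc e t) s
  apply_entry : 0 < e → ψ e = 0

namespace IsBackwardCharacteristic_s9

variable {a : ℝ → ℝ → ℝ} {T c Ma L t x e : ℝ} {ψ : ℝ → ℝ}

theorem mem_horizon (h : IsBackwardCharacteristic_s9 a T t x e ψ) {s : ℝ} (hs : s ∈ Icc e t) :
    s ∈ Icc 0 T :=
  ⟨h.entry_nonneg.trans hs.1, hs.2.trans h.le_horizon⟩

theorem apply_entry_nonneg (h : IsBackwardCharacteristic_s9 a T t x e ψ) : 0 ≤ ψ e :=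
  (h.mem_Icc e ⟨le_rfl, h.entry_le⟩).1

theorem hasDerivWithinAt_Icc (h : IsBackwardCharacteristic_s9 a T t x e ψ) {α β : ℝ}
    (hα : e ≤ α) (hβ : β ≤ t) :
    ∀ s ∈ Icc α β, HasDerivWithinAt ψ (a s (ψ s)) (Icc α β) s := fun s hs =>
  (h.hasDerivWithinAt s (Icc_subset_Icc hα hβ hs)).mono (Icc_subset_Icc hα hβ)

theorem mul_sub_le_sub_s9 (h : IsBackwardCharacteristic_s9 a T t x e ψ)
    (ha_pos : ∀ t ∈ Icc (0:ℝ) T, ∀ x ∈ Icc (0:ℝ) 1, c ≤ a t x)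
    {u v : ℝ} (hu : e ≤ u) (huv : u ≤ v) (hv : v ≤ t) : c * (v - u) ≤ ψ v - ψ u :=
  mul_sub_le_image_sub_of_le_hasDerivWithinAt_s9 h.hasDerivWithinAt
    (fun s hs => ha_pos s (h.mem_horizon hs) _ (h.mem_Icc s hs))
    ⟨hu, huv.trans hv⟩ ⟨hu.trans huv, hv⟩ huv

theorem abs_sub_le_mul_sub (h : IsBackwardCharacteristic_s9 a T t x e ψ)
    (ha_bdd : ∀ t ∈ Icc (0:ℝ) T, ∀ x ∈ Icc (0:ℝ) 1, |a t x| ≤ Ma)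
    {u v : ℝ} (hu : e ≤ u) (huv : u ≤ v) (hv : v ≤ t) : |ψ v - ψ u| ≤ Ma * (v - u) := by
  simpa [abs_of_nonneg (sub_nonneg.2 huv)] using
    (convex_Icc e t).norm_image_sub_le_of_norm_hasDerivWithin_le h.hasDerivWithinAt
      (fun s hs => ha_bdd s (h.mem_horizon hs) _ (h.mem_Icc s hs))
      ⟨hu, huv.trans hv⟩ ⟨hu.trans huv, hv⟩

theorem boundary_value_eq (h : IsBackwardCharacteristic_s9 a T t x e ψ) {yl y0 : ℝ → ℝ}
    (hcomp : yl 0 = y0 0) : (if 0 < e then yl e else y0 (ψ 0)) = yl e + y0 (ψ e) - yl 0 := by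
  split_ifs with he
  · rw [h.apply_entry he, ← hcomp]
    ring
  · obtain rfl : e = 0 := le_antisymm (not_lt.1 he) h.entry_nonneg
    ring

variable {t₁ x₁ e₁ t₂ x₂ e₂ : ℝ} {ψ₁ ψ₂ : ℝ → ℝ}

theorem entry_gap_le_gap (h₁ : IsBackwardCharacteristic_s9 a T t₁ x₁ e₁ ψ₁)
    (h₂ : IsBackwardCharacteristic_s9 a T t₂ x₂ e₂ ψ₂)
    (ha_pos : ∀ t ∈ Icc (0:ℝ) T, ∀ x ∈ Icc (0:ℝ) 1, c ≤ a t x)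
    (he : e₁ ≤ e₂) (he₂ : e₂ ≤ t₁) :
    c * (e₂ - e₁) + |ψ₁ e₁ - ψ₂ e₂| ≤ |ψ₁ e₂ - ψ₂ e₂| := by
  rcases h₂.entry_nonneg.eq_or_lt with he₂0 | he₂0
  · obtain rfl : e₁ = e₂ := le_antisymm he (he₂0 ▸ h₁.entry_nonneg)
    simp
  · have hψ₁e₂ : 0 ≤ ψ₁ e₂ := (h₁.mem_Icc e₂ ⟨he, he₂⟩).1
    rw [h₂.apply_entry he₂0, sub_zero, sub_zero, abs_of_nonneg h₁.apply_entry_nonneg,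
      abs_of_nonneg hψ₁e₂]
    linarith [h₁.mul_sub_le_sub_s9 ha_pos le_rfl he he₂]

theorem entry_gap_le_of_entry_le (h₁ : IsBackwardCharacteristic_s9 a T t₁ x₁ e₁ ψ₁)
    (h₂ : IsBackwardCharacteristic_s9 a T t₂ x₂ e₂ ψ₂) (hL : 0 ≤ L)
    (ha_pos : ∀ t ∈ Icc (0:ℝ) T, ∀ x ∈ Icc (0:ℝ) 1, c ≤ a t x)
    (ha_bdd : ∀ t ∈ Icc (0:ℝ) T, ∀ x ∈ Icc (0:ℝ) 1, |a t x| ≤ Ma)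
    (ha_lip : ∀ t ∈ Icc (0:ℝ) T, ∀ x ∈ Icc (0:ℝ) 1, ∀ x' ∈ Icc (0:ℝ) 1,
      |a t x - a t x'| ≤ L * |x - x'|)
    (ht : t₁ ≤ t₂) (he₂ : e₂ ≤ t₁) :
    c * |e₁ - e₂| + |ψ₁ e₁ - ψ₂ e₂| ≤ exp (L * T) * (max 1 Ma * (t₂ - t₁ + |x₁ - x₂|)) := by
  set m := max e₁ e₂
  have hm₁ : e₁ ≤ m := le_max_left _ _
  have hm₂ : e₂ ≤ m := le_max_right _ _
  have hmt : m ≤ t₁ := max_le h₁.entry_le he₂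
  have hgap_t₁ : |ψ₁ t₁ - ψ₂ t₁| ≤ max 1 Ma * (t₂ - t₁ + |x₁ - x₂|) := by
    have hspeed := h₂.abs_sub_le_mul_sub ha_bdd he₂ ht le_rfl
    rw [h₂.apply_self] at hspeed
    calc |ψ₁ t₁ - ψ₂ t₁| = |(x₁ - x₂) + (x₂ - ψ₂ t₁)| := by rw [h₁.apply_self]; ring_nf
      _ ≤ |x₁ - x₂| + Ma * (t₂ - t₁) := (abs_add_le _ _).trans (add_le_add_right hspeed _)
      _ ≤ max 1 Ma * (t₂ - t₁ + |x₁ - x₂|) := by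
        nlinarith [le_max_left 1 Ma, le_max_right 1 Ma, abs_nonneg (x₁ - x₂)]
  have hgap_m : |ψ₁ m - ψ₂ m| ≤ exp (L * T) * (max 1 Ma * (t₂ - t₁ + |x₁ - x₂|)) := by
    have hgron := abs_sub_le_mul_exp_of_trajectories_backward hL
      (fun s hs => ha_lip s (h₁.mem_horizon (Icc_subset_Icc hm₁ le_rfl hs)))
      (h₁.hasDerivWithinAt_Icc hm₁ le_rfl) (h₂.hasDerivWithinAt_Icc hm₂ ht)
      (fun s hs => h₁.mem_Icc s (Icc_subset_Icc hm₁ le_rfl hs))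
      (fun s hs => h₂.mem_Icc s (Icc_subset_Icc hm₂ ht hs)) m ⟨le_rfl, hmt⟩
    have hexp : exp (L * (t₁ - m)) ≤ exp (L * T) := by
      gcongr
      linarith [h₁.le_horizon, h₁.entry_nonneg]
    rw [mul_comm] at hgron
    exact hgron.trans (mul_le_mul hexp hgap_t₁ (abs_nonneg _) (exp_pos _).le)
  refine le_trans ?_ hgap_m
  rcases le_total e₁ e₂ with he | he
  · rw [abs_of_nonpos (sub_nonpos.2 he), neg_sub, show m = e₂ from max_eq_right he]
    exact h₁.entry_gap_le_gap h₂ ha_pos he he₂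
  · rw [abs_of_nonneg (sub_nonneg.2 he), show m = e₁ from max_eq_left he, abs_sub_comm (ψ₁ e₁),
      abs_sub_comm (ψ₁ e₁)]
    exact h₂.entry_gap_le_gap h₁ ha_pos he (h₁.entry_le.trans ht)

theorem entry_gap_le_of_lt_entry (h₁ : IsBackwardCharacteristic_s9 a T t₁ x₁ e₁ ψ₁)
    (h₂ : IsBackwardCharacteristic_s9 a T t₂ x₂ e₂ ψ₂)
    (ha_pos : ∀ t ∈ Icc (0:ℝ) T, ∀ x ∈ Icc (0:ℝ) 1, c ≤ a t x)
    (ha_bdd : ∀ t ∈ Icc (0:ℝ) T, ∀ x ∈ Icc (0:ℝ) 1, |a t x| ≤ Ma) (he₂ : t₁ < e₂) :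
    c * |e₁ - e₂| + |ψ₁ e₁ - ψ₂ e₂| ≤ max 1 Ma * (t₂ - t₁ + |x₁ - x₂|) := by
  have he₂0 : 0 < e₂ := lt_of_le_of_lt (h₁.entry_nonneg.trans h₁.entry_le) he₂
  have hψ₂e₂ := h₂.apply_entry he₂0
  have hcMa : c ≤ Ma := by
    have hmem := h₂.mem_Icc e₂ ⟨le_rfl, h₂.entry_le⟩
    have hs := h₂.mem_horizon ⟨le_rfl, h₂.entry_le⟩
    exact (ha_pos _ hs _ hmem).trans ((le_abs_self _).trans (ha_bdd _ hs _ hmem))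
  have hspeed₁ := h₁.mul_sub_le_sub_s9 ha_pos le_rfl h₁.entry_le le_rfl
  have hspeed₂ := h₂.abs_sub_le_mul_sub ha_bdd le_rfl h₂.entry_le le_rfl
  rw [h₁.apply_self] at hspeed₁
  rw [h₂.apply_self, hψ₂e₂, sub_zero] at hspeed₂
  rw [hψ₂e₂, sub_zero, abs_of_nonneg h₁.apply_entry_nonneg,
    abs_of_nonpos (by linarith [h₁.entry_le] : e₁ - e₂ ≤ 0)]
  have hΔt : 0 ≤ t₂ - t₁ := by linarith [h₂.entry_le]
  linarith [le_abs_self x₂, le_abs_self (x₁ - x₂),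
    mul_le_mul_of_nonneg_right hcMa (by linarith : 0 ≤ e₂ - t₁),
    mul_le_mul_of_nonneg_right (le_max_right 1 Ma) hΔt,
    mul_le_mul_of_nonneg_right (le_max_left 1 Ma) (abs_nonneg (x₁ - x₂))]

theorem entry_gap_le (h₁ : IsBackwardCharacteristic_s9 a T t₁ x₁ e₁ ψ₁)
    (h₂ : IsBackwardCharacteristic_s9 a T t₂ x₂ e₂ ψ₂) (hL : 0 ≤ L)
    (ha_pos : ∀ t ∈ Icc (0:ℝ) T, ∀ x ∈ Icc (0:ℝ) 1, c ≤ a t x)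
    (ha_bdd : ∀ t ∈ Icc (0:ℝ) T, ∀ x ∈ Icc (0:ℝ) 1, |a t x| ≤ Ma)
    (ha_lip : ∀ t ∈ Icc (0:ℝ) T, ∀ x ∈ Icc (0:ℝ) 1, ∀ x' ∈ Icc (0:ℝ) 1,
      |a t x - a t x'| ≤ L * |x - x'|)
    (ht : t₁ ≤ t₂) :
    c * |e₁ - e₂| + |ψ₁ e₁ - ψ₂ e₂| ≤ exp (L * T) * (max 1 Ma * (t₂ - t₁ + |x₁ - x₂|)) := by
  rcases le_or_gt e₂ t₁ with he₂ | he₂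
  · exact h₁.entry_gap_le_of_entry_le h₂ hL ha_pos ha_bdd ha_lip ht he₂
  · have hT : 0 ≤ T := h₁.entry_nonneg.trans (h₁.entry_le.trans h₁.le_horizon)
    exact (h₁.entry_gap_le_of_lt_entry h₂ ha_pos ha_bdd he₂).trans
      (le_mul_of_one_le_left (by nlinarith [le_max_left 1 Ma, abs_nonneg (x₁ - x₂)])
        (one_le_exp (mul_nonneg hL hT)))

end IsBackwardCharacteristic_s9

theorem abs_sub_le_of_lipschitz_boundary {yl y0 : ℝ → ℝ} {Ll L0 c e₁ e₂ z₁ z₂ : ℝ} (hc : 0 < c)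
    (hyl : ∀ t t' : ℝ, |yl t - yl t'| ≤ Ll * |t - t'|)
    (hy0 : ∀ x x' : ℝ, |y0 x - y0 x'| ≤ L0 * |x - x'|) :
    |(yl e₁ + y0 z₁ - yl 0) - (yl e₂ + y0 z₂ - yl 0)| ≤
      max (Ll / c) L0 * (c * |e₁ - e₂| + |z₁ - z₂|) := by
  have hLl : Ll ≤ max (Ll / c) L0 * c := (div_le_iff₀ hc).1 (le_max_left _ _)
  calc |(yl e₁ + y0 z₁ - yl 0) - (yl e₂ + y0 z₂ - yl 0)|
      = |(yl e₁ - yl e₂) + (y0 z₁ - y0 z₂)| := by ring_nf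
    _ ≤ Ll * |e₁ - e₂| + L0 * |z₁ - z₂| := (abs_add_le _ _).trans (add_le_add (hyl _ _) (hy0 _ _))
    _ ≤ max (Ll / c) L0 * (c * |e₁ - e₂| + |z₁ - z₂|) := by
      nlinarith [mul_le_mul_of_nonneg_right hLl (abs_nonneg (e₁ - e₂)),
        mul_le_mul_of_nonneg_right (le_max_right (Ll / c) L0) (abs_nonneg (z₁ - z₂))]

theorem stmt_9_general (T c L Ma Ll L0 : ℝ) (hc : 0 < c) (hL : 0 < L)
    (a : ℝ → ℝ → ℝ)
    (ha_pos : ∀ t ∈ Set.Icc (0:ℝ) T, ∀ x ∈ Set.Icc (0:ℝ) 1, c ≤ a t x)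
    (ha_bdd : ∀ t ∈ Set.Icc (0:ℝ) T, ∀ x ∈ Set.Icc (0:ℝ) 1, |a t x| ≤ Ma)
    (ha_lip : ∀ t ∈ Set.Icc (0:ℝ) T, ∀ x ∈ Set.Icc (0:ℝ) 1, ∀ x' ∈ Set.Icc (0:ℝ) 1,
      |a t x - a t x'| ≤ L * |x - x'|)
    -- the flow and entrance time
    (φ : ℝ → ℝ → ℝ → ℝ) (e f : ℝ → ℝ → ℝ)
    (hef : ∀ t ∈ Set.Icc (0:ℝ) T, ∀ x ∈ Set.Icc (0:ℝ) 1,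
      0 ≤ e t x ∧ e t x ≤ t ∧ t ≤ f t x ∧ f t x ≤ T)
    (hφ_init : ∀ t ∈ Set.Icc (0:ℝ) T, ∀ x ∈ Set.Icc (0:ℝ) 1, φ t t x = x)
    (hφ_mem : ∀ t ∈ Set.Icc (0:ℝ) T, ∀ x ∈ Set.Icc (0:ℝ) 1,
      ∀ s ∈ Set.Icc (e t x) (f t x), φ s t x ∈ Set.Icc (0:ℝ) 1)
    (hφ_ode : ∀ t ∈ Set.Icc (0:ℝ) T, ∀ x ∈ Set.Icc (0:ℝ) 1,
      ∀ s ∈ Set.Icc (e t x) (f t x),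
        HasDerivWithinAt (fun σ => φ σ t x) (a s (φ s t x)) (Set.Icc (e t x) (f t x)) s)
    (he_exit : ∀ t ∈ Set.Icc (0:ℝ) T, ∀ x ∈ Set.Icc (0:ℝ) 1,
      0 < e t x → φ (e t x) t x = 0)
    -- Lipschitz data, compatible at the corner
    (yl y0 : ℝ → ℝ)
    (hyl_lip : ∀ t t' : ℝ, |yl t - yl t'| ≤ Ll * |t - t'|)
    (hy0_lip : ∀ x x' : ℝ, |y0 x - y0 x'| ≤ L0 * |x - x'|)
    (hcomp : yl 0 = y0 0)
    -- the function defined by the method of characteristics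
    (y : ℝ → ℝ → ℝ)
    (hy : ∀ t ∈ Set.Icc (0:ℝ) T, ∀ x ∈ Set.Icc (0:ℝ) 1,
      y t x = if 0 < e t x then yl (e t x) else y0 (φ 0 t x)) :
    ∀ t₁ ∈ Set.Icc (0:ℝ) T, ∀ x₁ ∈ Set.Icc (0:ℝ) 1,
    ∀ t₂ ∈ Set.Icc (0:ℝ) T, ∀ x₂ ∈ Set.Icc (0:ℝ) 1,
      |y t₁ x₁ - y t₂ x₂| ≤
        max (Ll / c) L0 * max 1 Ma * Real.exp (L * T) * (|t₁ - t₂| + |x₁ - x₂|) := by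
  have hchar : ∀ t ∈ Icc (0:ℝ) T, ∀ x ∈ Icc (0:ℝ) 1,
      IsBackwardCharacteristic_s9 a T t x (e t x) (fun s => φ s t x) := by
    intro t ht x hx
    obtain ⟨he0, het, htf, -⟩ := hef t ht x hx
    have hsub : Icc (e t x) t ⊆ Icc (e t x) (f t x) := Icc_subset_Icc_right htf
    exact ⟨he0, het, ht.2, hφ_init t ht x hx, fun s hs => hφ_mem t ht x hx s (hsub hs),
      fun s hs => (hφ_ode t ht x hx s (hsub hs)).mono hsub, he_exit t ht x hx⟩
  have hM0 : 0 ≤ max (Ll / c) L0 :=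
    ((abs_nonneg _).trans (by simpa using hy0_lip 1 0)).trans (le_max_right _ _)
  have hle : ∀ t₁ ∈ Icc (0:ℝ) T, ∀ x₁ ∈ Icc (0:ℝ) 1, ∀ t₂ ∈ Icc (0:ℝ) T,
      ∀ x₂ ∈ Icc (0:ℝ) 1, t₁ ≤ t₂ → |y t₁ x₁ - y t₂ x₂| ≤
        max (Ll / c) L0 * max 1 Ma * exp (L * T) * (|t₁ - t₂| + |x₁ - x₂|) := by
    intro t₁ ht₁ x₁ hx₁ t₂ ht₂ x₂ hx₂ ht
    have h₁ := hchar t₁ ht₁ x₁ hx₁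
    have h₂ := hchar t₂ ht₂ x₂ hx₂
    rw [hy t₁ ht₁ x₁ hx₁, hy t₂ ht₂ x₂ hx₂, h₁.boundary_value_eq hcomp,
      h₂.boundary_value_eq hcomp, abs_sub_comm t₁, abs_of_nonneg (sub_nonneg.2 ht)]
    calc _ ≤ max (Ll / c) L0 *
          (c * |e t₁ x₁ - e t₂ x₂| + |φ (e t₁ x₁) t₁ x₁ - φ (e t₂ x₂) t₂ x₂|) :=
          abs_sub_le_of_lipschitz_boundary hc hyl_lip hy0_lip
      _ ≤ max (Ll / c) L0 * (exp (L * T) * (max 1 Ma * (t₂ - t₁ + |x₁ - x₂|))) :=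
          mul_le_mul_of_nonneg_left (h₁.entry_gap_le h₂ hL.le ha_pos ha_bdd ha_lip ht) hM0
      _ = _ := by ring
  intro t₁ ht₁ x₁ hx₁ t₂ ht₂ x₂ hx₂
  rcases le_total t₁ t₂ with ht | ht
  · exact hle t₁ ht₁ x₁ hx₁ t₂ ht₂ x₂ hx₂ ht
  · rw [abs_sub_comm (y t₁ x₁), abs_sub_comm t₁, abs_sub_comm x₁]
    exact hle t₂ ht₂ x₂ hx₂ t₁ ht₁ x₁ hx₁ ht

/-- Lipschitz bound for the weak solution of the transport equation defined by
the method of characteristics: if `y_l` is `L_l`-Lipschitz, `y₀` is `L₀`-Lipschitz,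
`y_l(0) = y₀(0)`, `a` is bounded by `Ma`, `L`-Lipschitz in `x`, and `a ≥ c > 0`, then
the function `y(t,x) = y_l(e(t,x))` (if `e(t,x) > 0`), `= y₀(φ(0,t,x))` (otherwise)
is `M`-Lipschitz with `M = max(L_l/c, L₀)·max(1, Ma)·e^{LT}`. -/
theorem stmt_9 (T c L Ma Ll L0 : ℝ) (hT : 0 < T) (hc : 0 < c) (hL : 0 < L) (hMa : 0 ≤ Ma)
    (a : ℝ → ℝ → ℝ)
    (ha_cont : ContinuousOn (fun p : ℝ × ℝ => a p.1 p.2) (Set.Icc 0 T ×ˢ Set.Icc 0 1))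
    (ha_pos : ∀ t ∈ Set.Icc (0:ℝ) T, ∀ x ∈ Set.Icc (0:ℝ) 1, c ≤ a t x)
    (ha_bdd : ∀ t ∈ Set.Icc (0:ℝ) T, ∀ x ∈ Set.Icc (0:ℝ) 1, |a t x| ≤ Ma)
    (ha_lip : ∀ t ∈ Set.Icc (0:ℝ) T, ∀ x ∈ Set.Icc (0:ℝ) 1, ∀ x' ∈ Set.Icc (0:ℝ) 1,
      |a t x - a t x'| ≤ L * |x - x'|)
    -- the flow and entrance time
    (φ : ℝ → ℝ → ℝ → ℝ) (e f : ℝ → ℝ → ℝ)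
    (hef : ∀ t ∈ Set.Icc (0:ℝ) T, ∀ x ∈ Set.Icc (0:ℝ) 1,
      0 ≤ e t x ∧ e t x ≤ t ∧ t ≤ f t x ∧ f t x ≤ T)
    (hφ_init : ∀ t ∈ Set.Icc (0:ℝ) T, ∀ x ∈ Set.Icc (0:ℝ) 1, φ t t x = x)
    (hφ_mem : ∀ t ∈ Set.Icc (0:ℝ) T, ∀ x ∈ Set.Icc (0:ℝ) 1,
      ∀ s ∈ Set.Icc (e t x) (f t x), φ s t x ∈ Set.Icc (0:ℝ) 1)
    (hφ_ode : ∀ t ∈ Set.Icc (0:ℝ) T, ∀ x ∈ Set.Icc (0:ℝ) 1,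
      ∀ s ∈ Set.Icc (e t x) (f t x),
        HasDerivWithinAt (fun σ => φ σ t x) (a s (φ s t x)) (Set.Icc (e t x) (f t x)) s)
    (he_exit : ∀ t ∈ Set.Icc (0:ℝ) T, ∀ x ∈ Set.Icc (0:ℝ) 1,
      0 < e t x → φ (e t x) t x = 0)
    -- Lipschitz data, compatible at the corner
    (yl y0 : ℝ → ℝ)
    (hyl_lip : ∀ t t' : ℝ, |yl t - yl t'| ≤ Ll * |t - t'|)
    (hy0_lip : ∀ x x' : ℝ, |y0 x - y0 x'| ≤ L0 * |x - x'|)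
    (hcomp : yl 0 = y0 0)
    -- the function defined by the method of characteristics
    (y : ℝ → ℝ → ℝ)
    (hy : ∀ t ∈ Set.Icc (0:ℝ) T, ∀ x ∈ Set.Icc (0:ℝ) 1,
      y t x = if 0 < e t x then yl (e t x) else y0 (φ 0 t x)) :
    ∀ t₁ ∈ Set.Icc (0:ℝ) T, ∀ x₁ ∈ Set.Icc (0:ℝ) 1,
    ∀ t₂ ∈ Set.Icc (0:ℝ) T, ∀ x₂ ∈ Set.Icc (0:ℝ) 1,
      |y t₁ x₁ - y t₂ x₂| ≤
        max (Ll / c) L0 * max 1 Ma * Real.exp (L * T) * (|t₁ - t₂| + |x₁ - x₂|) :=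
  stmt_9_general T c L Ma Ll L0 hc hL a ha_pos ha_bdd ha_lip φ e f hef hφ_init hφ_mem hφ_ode he_exit
    yl y0 hyl_lip hy0_lip hcomp y hy
end
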